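/- Let X be a real Hilbert space, g : X → X a κ-contraction with 0 ≤ κ < 1, m ≥ 1, and points x_{j−m−1}, …, x_{j−1} ∈ X with residuals w_n := g(x_{n−1}) − x_{n−1} for n = j−m, …, j, all consecutive differences w_n − w_{n−1} nonzero. Suppose (α_{j−m−1}, …, α_{j−1}) ∈ ℝ^{m+1} minimizes ‖Σ_{n=j−m−1}^{j−1} α_n w_{n+1}‖ subject to Σ_n α_n = 1, and set γ_n := Σ_{i=j−m−1}^{n−1} α_i. Then for every p with j−m+1 ≤ p ≤ j, |γ_{p−1}| ‖e_{p−1}‖ ≤ (1 − κ)^{−1} ( Σ_{n=j−m}^{p−2} |α_{n−1}| ‖w_n‖ + |γ_{p−2}| ‖w_{p−1}‖ + |γ_p| ‖w_p‖ + Σ_{n=p+1}^{j} |α_{n−1}| ‖w_n‖ ), where e_{p−1} := x_{p−1} − x_{p−2}. -/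

import Mathlib

/-!
Write `S = ∑ α_n w_{n+1}` for the optimal combination and `v = w_p - w_{p-1}`. Moving weight `t`
from index `p - 2` to `p - 1` preserves the constraint and turns `S` into `S + t v`, so optimality
forces `S ⊥ v`. Summation by parts around the pair `(p - 2, p - 1)` gives `S + γ_{p-1} v = U`, where
`U` collects the remaining terms of the right-hand side, hence `|γ_{p-1}| ‖v‖ ≤ ‖U‖` by Pythagoras,
and `‖U‖` is bounded by the triangle inequality. Finally `(1 - κ) ‖e_{p-1}‖ ≤ ‖v‖` since `g` is a
`κ`-contraction.
-/

open Finset RealInnerProductSpace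

theorem Int.sum_Icc_eq_sum_Icc_add_sum_Icc {M : Type*} [AddCommMonoid M] (f : ℤ → M) {a b c : ℤ}
    (hab : a ≤ b + 1) (hbc : b ≤ c) :
    ∑ n ∈ Icc a c, f n = ∑ n ∈ Icc a b, f n + ∑ n ∈ Icc (b + 1) c, f n := by
  rw [← sum_union (disjoint_left.2 fun n h₁ h₂ => by simp only [mem_Icc] at h₁ h₂; omega)]
  congr 1
  ext n
  simp only [mem_Icc, mem_union]
  omega

theorem Int.sum_Icc_eq_sum_Icc_sub_one_add {M : Type*} [AddCommMonoid M] (f : ℤ → M) {a b : ℤ}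
    (hab : a ≤ b) : ∑ n ∈ Icc a b, f n = ∑ n ∈ Icc a (b - 1), f n + f b := by
  rw [Int.sum_Icc_eq_sum_Icc_add_sum_Icc f (by omega) (by omega : b - 1 ≤ b), sub_add_cancel,
    Icc_self, sum_singleton]

theorem Int.sum_Icc_add_one {M : Type*} [AddCommMonoid M] (f : ℤ → M) (a b : ℤ) :
    ∑ n ∈ Icc a b, f (n + 1) = ∑ n ∈ Icc (a + 1) (b + 1), f n := by
  rw [← map_add_right_Icc, sum_map]
  rfl

theorem Int.sum_Icc_smul_add_smul_sub_eq {R M : Type*} [CommRing R] [AddCommGroup M] [Module R M]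
    {α γ : ℤ → R} {w : ℤ → M} {a b p : ℤ} (hγ : ∀ n, γ n = ∑ i ∈ Icc (a - 1) (n - 1), α i)
    (hap : a + 1 ≤ p) (hpb : p ≤ b) :
    ∑ n ∈ Icc (a - 1) (b - 1), α n • w (n + 1) + γ (p - 1) • (w p - w (p - 1)) =
      ∑ n ∈ Icc a (p - 2), α (n - 1) • w n - γ (p - 2) • w (p - 1) + γ p • w p +
        ∑ n ∈ Icc (p + 1) b, α (n - 1) • w n := by
  have hp₁ : p - 1 - 1 = p - 2 := by ring
  have hγ_succ : ∀ n, a ≤ n → γ n = γ (n - 1) + α (n - 1) := fun n hn => by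
    rw [hγ, hγ, Int.sum_Icc_eq_sum_Icc_sub_one_add _ (by omega)]
  have hshift := Int.sum_Icc_add_one (fun n => α (n - 1) • w n) (a - 1) (b - 1)
  simp only [add_sub_cancel_right, sub_add_cancel] at hshift
  rw [hshift, Int.sum_Icc_eq_sum_Icc_add_sum_Icc _ (by omega) hpb,
    Int.sum_Icc_eq_sum_Icc_sub_one_add _ (by omega),
    Int.sum_Icc_eq_sum_Icc_sub_one_add _ (by omega), hγ_succ p (by omega),
    hγ_succ (p - 1) (by omega), hp₁]
  module

theorem inner_eq_zero_of_forall_norm_le_norm_add_smul {E : Type*} [NormedAddCommGroup E]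
    [InnerProductSpace ℝ E] {x y : E} (h : ∀ t : ℝ, ‖x‖ ≤ ‖x + t • y‖) : ⟪x, y⟫ = 0 := by
  rcases eq_or_ne y 0 with rfl | hy
  · exact inner_zero_right x
  have hsq := pow_le_pow_left₀ (norm_nonneg x) (h (-⟪x, y⟫ / ‖y‖ ^ 2)) 2
  rw [norm_add_sq_real, real_inner_smul_right, norm_smul, mul_pow, Real.norm_eq_abs, sq_abs] at hsq
  have hexpand : ‖x‖ ^ 2 + 2 * (-⟪x, y⟫ / ‖y‖ ^ 2 * ⟪x, y⟫) + (-⟪x, y⟫ / ‖y‖ ^ 2) ^ 2 * ‖y‖ ^ 2 =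
      ‖x‖ ^ 2 - ⟪x, y⟫ ^ 2 / ‖y‖ ^ 2 := by
    field_simp
    ring
  have hnonpos : ⟪x, y⟫ ^ 2 / ‖y‖ ^ 2 ≤ 0 := by linarith
  rw [div_le_iff₀ (by positivity), zero_mul] at hnonpos
  exact pow_eq_zero_iff two_ne_zero |>.1 (le_antisymm hnonpos (sq_nonneg _))

theorem inner_sum_smul_sub_eq_zero_of_isMinOn {ι E : Type*} [NormedAddCommGroup E]
    [InnerProductSpace ℝ E] [DecidableEq ι] {s : Finset ι} {f : ι → E} {α : ι → ℝ}
    (hmin : IsMinOn (fun b : ι → ℝ => ‖∑ n ∈ s, b n • f n‖) {b | ∑ n ∈ s, b n = 1} α)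
    (hα : ∑ n ∈ s, α n = 1) {i k : ι} (hi : i ∈ s) (hk : k ∈ s) :
    ⟪∑ n ∈ s, α n • f n, f i - f k⟫ = 0 := by
  refine inner_eq_zero_of_forall_norm_le_norm_add_smul fun t => ?_
  let b : ι → ℝ := fun n => α n + (if n = i then t else 0) - (if n = k then t else 0)
  have hb : ∑ n ∈ s, b n = 1 := by
    simp only [b, sum_sub_distrib, sum_add_distrib, sum_ite_eq', hi, hk, if_true, hα]
    ring
  have hbf : ∑ n ∈ s, b n • f n = ∑ n ∈ s, α n • f n + t • (f i - f k) := by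
    simp only [b, sub_smul, add_smul, ite_smul, zero_smul, sum_sub_distrib, sum_add_distrib,
      sum_ite_eq', hi, hk, if_true, smul_sub]
    abel
  simpa only [hbf] using isMinOn_iff.1 hmin b hb

theorem norm_le_norm_add_of_inner_eq_zero {E : Type*} [NormedAddCommGroup E]
    [InnerProductSpace ℝ E] {x y : E} (h : ⟪x, y⟫ = 0) : ‖y‖ ≤ ‖x + y‖ := by
  have := norm_add_sq_eq_norm_sq_add_norm_sq_real h
  nlinarith [norm_nonneg y, norm_nonneg (x + y), mul_self_nonneg ‖x‖]

theorem one_sub_mul_norm_sub_le_norm_sub_sub {E : Type*} [SeminormedAddCommGroup E] {g : E → E}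
    {κ : ℝ} (hg : ∀ x y : E, ‖g y - g x‖ ≤ κ * ‖x - y‖) (x y : E) :
    (1 - κ) * ‖x - y‖ ≤ ‖(g x - x) - (g y - y)‖ := by
  have htri : ‖x - y‖ ≤ ‖g x - g y‖ + ‖(g x - x) - (g y - y)‖ := by
    calc ‖x - y‖ = ‖(g x - g y) - ((g x - x) - (g y - y))‖ := by congr 1; abel
      _ ≤ _ := norm_sub_le _ _
  linarith [norm_sub_rev y x ▸ hg y x]

theorem norm_sum_smul_le {ι E : Type*} [SeminormedAddCommGroup E] [NormedSpace ℝ E]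
    (s : Finset ι) (c : ι → ℝ) (f : ι → E) : ‖∑ n ∈ s, c n • f n‖ ≤ ∑ n ∈ s, |c n| * ‖f n‖ :=
  (norm_sum_le _ _).trans_eq (by simp only [norm_smul, Real.norm_eq_abs])

theorem stmt_6_general {X : Type*} [NormedAddCommGroup X] [InnerProductSpace ℝ X]
    (g : X → X) (κ : ℝ) (hκ1 : κ < 1)
    (hg : ∀ x y : X, ‖g y - g x‖ ≤ κ * ‖x - y‖)
    (m : ℕ) (j : ℤ)
    (x : ℤ → X) (w : ℤ → X)
    (hw : ∀ n, w n = g (x (n - 1)) - x (n - 1))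
    (α : ℤ → ℝ)
    (hsum : ∑ n ∈ Finset.Icc (j - (m : ℤ) - 1) (j - 1), α n = 1)
    (hmin : ∀ b : ℤ → ℝ, ∑ n ∈ Finset.Icc (j - (m : ℤ) - 1) (j - 1), b n = 1 →
      ‖∑ n ∈ Finset.Icc (j - (m : ℤ) - 1) (j - 1), α n • w (n + 1)‖ ≤
      ‖∑ n ∈ Finset.Icc (j - (m : ℤ) - 1) (j - 1), b n • w (n + 1)‖)
    (γ : ℤ → ℝ) (hγ : ∀ n, γ n = ∑ i ∈ Finset.Icc (j - (m : ℤ) - 1) (n - 1), α i) :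
    ∀ p : ℤ, j - (m : ℤ) + 1 ≤ p → p ≤ j →
      |γ (p - 1)| * ‖x (p - 1) - x (p - 2)‖ ≤
        (1 - κ)⁻¹ * ((∑ n ∈ Finset.Icc (j - (m : ℤ)) (p - 2), |α (n - 1)| * ‖w n‖) +
          |γ (p - 2)| * ‖w (p - 1)‖ + |γ p| * ‖w p‖ +
          ∑ n ∈ Finset.Icc (p + 1) j, |α (n - 1)| * ‖w n‖) := by
  intro p hp hpj
  set S := ∑ n ∈ Icc (j - m - 1) (j - 1), α n • w (n + 1)
  set v := w p - w (p - 1)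
  set U := ∑ n ∈ Icc (j - m) (p - 2), α (n - 1) • w n - γ (p - 2) • w (p - 1) + γ p • w p +
    ∑ n ∈ Icc (p + 1) j, α (n - 1) • w n
  have horth : ⟪S, v⟫ = 0 := by
    have := inner_sum_smul_sub_eq_zero_of_isMinOn (f := fun n => w (n + 1))
      (isMinOn_iff.2 hmin) hsum (i := p - 1) (k := p - 2) (by simp only [mem_Icc]; omega)
      (by simp only [mem_Icc]; omega)
    rwa [sub_add_cancel, show p - 2 + 1 = p - 1 by ring] at this
  have hdecomp : S + γ (p - 1) • v = U := Int.sum_Icc_smul_add_smul_sub_eq hγ hp hpj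
  have hγv : |γ (p - 1)| * ‖v‖ ≤ ‖U‖ := by
    rw [← hdecomp, ← Real.norm_eq_abs, ← norm_smul]
    exact norm_le_norm_add_of_inner_eq_zero (by rw [real_inner_smul_right, horth, mul_zero])
  have hU : ‖U‖ ≤ (∑ n ∈ Icc (j - m) (p - 2), |α (n - 1)| * ‖w n‖) +
      |γ (p - 2)| * ‖w (p - 1)‖ + |γ p| * ‖w p‖ + ∑ n ∈ Icc (p + 1) j, |α (n - 1)| * ‖w n‖ := by
    refine (norm_add_le _ _).trans (add_le_add ((norm_add_le _ _).trans (add_le_add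
      ((norm_sub_le _ _).trans (add_le_add (norm_sum_smul_le _ _ _) ?_)) ?_))
      (norm_sum_smul_le _ _ _)) <;> rw [norm_smul, Real.norm_eq_abs]
  have hcontr : (1 - κ) * ‖x (p - 1) - x (p - 2)‖ ≤ ‖v‖ := by
    simpa only [v, hw, show p - 1 - 1 = p - 2 by ring] using
      one_sub_mul_norm_sub_le_norm_sub_sub hg (x (p - 1)) (x (p - 2))
  rw [inv_mul_eq_div, le_div_iff₀ (by linarith)]
  nlinarith [abs_nonneg (γ (p - 1))]

/-- general-depth Anderson bound: for every `p` with `j-m+1 ≤ p ≤ j`,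
`|γ_{p-1}| ‖e_{p-1}‖ ≤ (1-κ)⁻¹ (Σ_{n=j-m}^{p-2} |α_{n-1}| ‖w_n‖ + |γ_{p-2}| ‖w_{p-1}‖ +
  |γ_p| ‖w_p‖ + Σ_{n=p+1}^{j} |α_{n-1}| ‖w_n‖)`. -/
theorem stmt_6 {X : Type*} [NormedAddCommGroup X] [InnerProductSpace ℝ X] [CompleteSpace X]
    (g : X → X) (κ : ℝ) (hκ0 : 0 ≤ κ) (hκ1 : κ < 1)
    (hg : ∀ x y : X, ‖g y - g x‖ ≤ κ * ‖x - y‖)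
    (m : ℕ) (hm : 1 ≤ m) (j : ℤ)
    (x : ℤ → X) (w : ℤ → X)
    (hw : ∀ n, w n = g (x (n - 1)) - x (n - 1))
    (hwne : ∀ n ∈ Finset.Icc (j - (m : ℤ) + 1) j, w n ≠ w (n - 1))
    (α : ℤ → ℝ)
    (hsum : ∑ n ∈ Finset.Icc (j - (m : ℤ) - 1) (j - 1), α n = 1)
    (hmin : ∀ b : ℤ → ℝ, ∑ n ∈ Finset.Icc (j - (m : ℤ) - 1) (j - 1), b n = 1 →
      ‖∑ n ∈ Finset.Icc (j - (m : ℤ) - 1) (j - 1), α n • w (n + 1)‖ ≤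
      ‖∑ n ∈ Finset.Icc (j - (m : ℤ) - 1) (j - 1), b n • w (n + 1)‖)
    (γ : ℤ → ℝ) (hγ : ∀ n, γ n = ∑ i ∈ Finset.Icc (j - (m : ℤ) - 1) (n - 1), α i) :
    ∀ p : ℤ, j - (m : ℤ) + 1 ≤ p → p ≤ j →
      |γ (p - 1)| * ‖x (p - 1) - x (p - 2)‖ ≤
        (1 - κ)⁻¹ * ((∑ n ∈ Finset.Icc (j - (m : ℤ)) (p - 2), |α (n - 1)| * ‖w n‖) +
          |γ (p - 2)| * ‖w (p - 1)‖ + |γ p| * ‖w p‖ +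
          ∑ n ∈ Finset.Icc (p + 1) j, |α (n - 1)| * ‖w n‖) :=
  stmt_6_general g κ hκ1 hg m j x w hw α hsum hmin γ hγ
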